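/- arXiv:1105.4972 — 3 statements merged into one kernel-verified Lean document; each statement's English description precedes it below -/
import Mathlib

section
/- Let f : ℂ → ℂ be continuous and bounded on the closed upper half-plane {λ ∈ ℂ : Im λ ≥ 0} and complex differentiable (holomorphic) on the open upper half-plane {λ ∈ ℂ : Im λ > 0}. Then for every z ∈ ℂ with Im z > 0, the function λ ↦ f(λ)·h_z(λ) is Lebesgue integrable on ℝ and ∫_{-∞}^{∞} f(λ) h_z(λ) dλ = f(z), where h_z(ζ) := (1/(2πi))·(1/(ζ − z) − 1/(ζ − z̄)). -/
/-!
For `Im z > 0` the kernel `h_z` is the Poisson kernel `Im z / (π |x - z|²)`, of total mass `1`,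
so it suffices to show `∫ (f x - f z) h_z(x) dx = 0`. Up to the factor `2πi` the integrand is the
restriction to `ℝ` of `g w = (f w - f z) (1 / (w - z) - 1 / (w - z̄))`: the singularity of `g` at
`z` is removable and `z̄` lies in the lower half-plane, so `g` is holomorphic in the upper
half-plane and continuous up to `ℝ`, and `w g(w) → 0` at infinity since `f` is bounded.
Cauchy's theorem for the rectangles `[-R, R] × [0, R]` bounds `∫_{-R}^{R} g` by four times the
supremum of `|w g(w)|` over `|w| ≥ R`, which tends to `0`.
-/

open MeasureTheory Complex Filter Topology Bornology Set ComplexConjugate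

theorem integrable_inv_sub_sq_add_sq (a : ℝ) {b : ℝ} (hb : b ≠ 0) :
    Integrable fun x : ℝ => ((x - a) ^ 2 + b ^ 2)⁻¹ := by
  have h := (integrable_inv_one_add_sq.comp_mul_right' (inv_ne_zero hb)).const_mul (b ^ 2)⁻¹
  refine (h.comp_sub_right a).congr (.of_forall fun x => ?_)
  field_simp
  ring

theorem integral_inv_sub_sq_add_sq (a : ℝ) {b : ℝ} (hb : b ≠ 0) :
    ∫ x : ℝ, ((x - a) ^ 2 + b ^ 2)⁻¹ = Real.pi / |b| := by
  have h : ∀ y : ℝ, (y ^ 2 + b ^ 2)⁻¹ = (b ^ 2)⁻¹ * (1 + (y * b⁻¹) ^ 2)⁻¹ := fun y => by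
    field_simp
    ring
  rw [integral_sub_right_eq_self (fun y : ℝ => (y ^ 2 + b ^ 2)⁻¹) a]
  simp_rw [h]
  rw [integral_const_mul, Measure.integral_comp_mul_right (fun v : ℝ => (1 + v ^ 2)⁻¹),
    integral_univ_inv_one_add_sq, smul_eq_mul]
  simp only [inv_inv, ← sq_abs b]
  field_simp

section Contour

variable {E : Type*} [NormedAddCommGroup E] [NormedSpace ℂ E] {g : ℂ → E}

theorem norm_intervalIntegral_le_of_upperHalfPlane
    (hc : ContinuousOn g {w | 0 ≤ w.im}) (hd : DifferentiableOn ℂ g {w | 0 < w.im})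
    {c R : ℝ} (hR : 0 < R) (hg : ∀ w : ℂ, 0 ≤ w.im → R ≤ ‖w‖ → ‖g w‖ ≤ c / R) :
    ‖∫ x in -R..R, g x‖ ≤ 4 * c := by
  have hrect := integral_boundary_rect_eq_zero_of_continuousOn_of_differentiableOn g
    (-R : ℝ) (R + R * I) (hc.mono fun w hw => ?_) (hd.mono fun w hw => ?_)
  rotate_left
  · simpa [hR.le] using hw.2.1
  · simpa [hR.le] using hw.2.1
  have hside : ∀ (a b : ℝ) (γ : ℝ → ℂ), (∀ t ∈ uIoc a b, 0 ≤ (γ t).im ∧ R ≤ ‖γ t‖) →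
      ‖∫ t in a..b, g (γ t)‖ ≤ c / R * |b - a| := fun a b γ hγ =>
    intervalIntegral.norm_integral_le_of_norm_le_const fun t ht => hg _ (hγ t ht).1 (hγ t ht).2
  have htop : ‖∫ x in -R..R, g (x + R * I)‖ ≤ c / R * (2 * R) := by
    convert hside (-R) R (fun x => x + R * I) fun x _ => ⟨by simp [hR.le],
      by simpa [abs_of_pos hR] using abs_im_le_norm ((x : ℂ) + R * I)⟩ using 2
    rw [sub_neg_eq_add, ← two_mul, abs_of_pos (by positivity)]
  have hright : ‖∫ y in (0 : ℝ)..R, g (R + y * I)‖ ≤ c / R * R := by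
    convert hside 0 R (fun y => R + y * I) fun y hy => ⟨by simpa [hR.le] using hy.1.le,
      by simpa [abs_of_pos hR] using abs_re_le_norm ((R : ℂ) + y * I)⟩ using 2
    rw [sub_zero, abs_of_pos hR]
  have hleft : ‖∫ y in (0 : ℝ)..R, g (-R + y * I)‖ ≤ c / R * R := by
    convert hside 0 R (fun y => -R + y * I) fun y hy => ⟨by simpa [hR.le] using hy.1.le,
      by simpa [abs_of_pos hR] using abs_re_le_norm (-(R : ℂ) + y * I)⟩ using 2
    rw [sub_zero, abs_of_pos hR]
  have hbottom : (∫ x in -R..R, g x) = (∫ x in -R..R, g (x + R * I)) -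
      I • (∫ y in (0 : ℝ)..R, g (R + y * I)) + I • ∫ y in (0 : ℝ)..R, g (-R + y * I) := by
    rw [← sub_eq_zero, ← hrect]
    simp only [ofReal_neg, neg_im, ofReal_im, neg_zero, ofReal_zero, zero_mul, add_zero, neg_re,
      ofReal_re, add_re, mul_re, I_re, mul_zero, I_im, mul_one, sub_self, add_im, mul_im, zero_add]
    abel
  rw [hbottom]
  refine (norm_add_le _ _).trans ((add_le_add_left (norm_sub_le _ _) _).trans ?_)
  rw [norm_smul, norm_smul, norm_I, one_mul, one_mul]
  calc _ ≤ c / R * (2 * R) + c / R * R + c / R * R := by linarith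
    _ = 4 * c := by field_simp; ring

theorem integral_eq_zero_of_upperHalfPlane
    (hc : ContinuousOn g {w | 0 ≤ w.im}) (hd : DifferentiableOn ℂ g {w | 0 < w.im})
    (hint : Integrable fun x : ℝ => g x)
    (hdecay : Tendsto (fun w => w • g w) (cobounded ℂ ⊓ 𝓟 {w | 0 ≤ w.im}) (𝓝 0)) :
    ∫ x : ℝ, g x = 0 := by
  refine tendsto_nhds_unique
    (intervalIntegral_tendsto_integral hint tendsto_neg_atTop_atBot tendsto_id)
    (Metric.tendsto_nhds.2 fun ε hε => ?_)
  obtain ⟨R₀, -, hR₀⟩ := (hasBasis_cobounded_norm.inf_principal _).eventually_iff.1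
    (Metric.tendsto_nhds.1 hdecay (ε / 8) (by positivity))
  filter_upwards [eventually_ge_atTop R₀, eventually_gt_atTop 0] with R hR₀R hR
  have hg : ∀ w : ℂ, 0 ≤ w.im → R ≤ ‖w‖ → ‖g w‖ ≤ ε / 8 / R := fun w hw hRw => by
    have hw' : ‖w‖ * ‖g w‖ < ε / 8 := by
      simpa [norm_smul] using hR₀ ⟨hR₀R.trans hRw, hw⟩
    rw [le_div_iff₀ hR]
    nlinarith [norm_nonneg (g w)]
  calc dist (∫ x in -R..R, g x) 0 = ‖∫ x in -R..R, g x‖ := dist_zero_right _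
    _ ≤ 4 * (ε / 8) := norm_intervalIntegral_le_of_upperHalfPlane hc hd hR hg
    _ < ε := by linarith

end Contour

theorem tendsto_mul_one_div_sub_sub_one_div_sub_cobounded {𝕜 : Type*} [NormedField 𝕜]
    (a b : 𝕜) :
    Tendsto (fun w => w * (1 / (w - a) - 1 / (w - b))) (cobounded 𝕜) (𝓝 0) := by
  have hinv : ∀ c : 𝕜, Tendsto (fun w => c * (w - c)⁻¹) (cobounded 𝕜) (𝓝 0) := fun c => by
    simpa using (tendsto_inv₀_cobounded.comp (tendsto_sub_const_cobounded c)).const_mul c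
  have h := (hinv a).sub (hinv b)
  rw [sub_zero] at h
  refine h.congr' ?_
  filter_upwards [eventually_ne_cobounded a, eventually_ne_cobounded b] with w ha hb
  field_simp [sub_ne_zero.2 ha, sub_ne_zero.2 hb]
  ring

noncomputable def halfPlanePoissonKernel (z ζ : ℂ) : ℂ :=
  1 / (2 * Real.pi * I) * (1 / (ζ - z) - 1 / (ζ - conj z))

theorem halfPlanePoissonKernel_ofReal (x : ℝ) {z : ℂ} (hz : z.im ≠ 0) :
    halfPlanePoissonKernel z x = ((z.im / Real.pi * ((x - z.re) ^ 2 + z.im ^ 2)⁻¹ : ℝ) : ℂ) := by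
  have h1 : (x : ℂ) - z ≠ 0 := fun h => hz (by simpa using congrArg im h)
  have h2 : (x : ℂ) - conj z ≠ 0 := fun h => hz (by simpa using congrArg im h)
  have hprod : ((x : ℂ) - z) * ((x : ℂ) - conj z) = ((x - z.re) ^ 2 + z.im ^ 2 : ℝ) := by
    apply Complex.ext <;> simp [sq]; ring
  have hsum : 1 / ((x : ℂ) - z) - 1 / ((x : ℂ) - conj z)
      = (z - conj z) / (((x : ℂ) - z) * ((x : ℂ) - conj z)) := by
    field_simp
    ring
  rw [halfPlanePoissonKernel, hsum, hprod, sub_conj]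
  push_cast
  field_simp

theorem integrable_halfPlanePoissonKernel {z : ℂ} (hz : z.im ≠ 0) :
    Integrable fun x : ℝ => halfPlanePoissonKernel z x := by
  simp_rw [halfPlanePoissonKernel_ofReal _ hz]
  exact ((integrable_inv_sub_sq_add_sq z.re hz).const_mul _).ofReal

theorem integral_halfPlanePoissonKernel {z : ℂ} (hz : 0 < z.im) :
    ∫ x : ℝ, halfPlanePoissonKernel z x = 1 := by
  simp_rw [halfPlanePoissonKernel_ofReal _ hz.ne']
  rw [integral_complex_ofReal, integral_const_mul, integral_inv_sub_sq_add_sq z.re hz.ne',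
    abs_of_pos hz]
  field_simp
  simp

theorem integral_sub_mul_halfPlanePoissonKernel_eq_zero {f : ℂ → ℂ} {M : ℝ} {z : ℂ}
    (hf_cont : ContinuousOn f {w : ℂ | 0 ≤ w.im})
    (hf_bdd : ∀ w : ℂ, 0 ≤ w.im → ‖f w‖ ≤ M)
    (hf_diff : DifferentiableOn ℂ f {w : ℂ | 0 < w.im}) (hz : 0 < z.im) :
    ∫ x : ℝ, (f x - f z) * halfPlanePoissonKernel z x = 0 := by
  have hnhds : {w : ℂ | 0 < w.im} ∈ 𝓝 z := (isOpen_lt continuous_const continuous_im).mem_nhds hz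
  have hnhds' : {w : ℂ | 0 ≤ w.im} ∈ 𝓝 z := by filter_upwards [hnhds] with w hw using hw.le
  have hbound : ∀ w : ℂ, 0 ≤ w.im → ‖f w - f z‖ ≤ M + M := fun w hw =>
    (norm_sub_le _ _).trans (add_le_add (hf_bdd w hw) (hf_bdd z hz.le))
  have hconj : ∀ w : ℂ, 0 ≤ w.im → w - conj z ≠ 0 := fun w hw h => by
    linarith [show w.im + z.im = 0 by simpa using congrArg im h]
  set g : ℂ → ℂ := fun w => dslope f z w - (f w - f z) / (w - conj z)
  have hg_eq : ∀ w, w ≠ z → g w = (f w - f z) * (1 / (w - z) - 1 / (w - conj z)) := fun w hw => by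
    simp only [g, dslope_of_ne _ hw, slope_def_field]
    ring
  have hc : ContinuousOn g {w | 0 ≤ w.im} :=
    ((continuousOn_dslope hnhds').2 ⟨hf_cont, hf_diff.differentiableAt hnhds⟩).sub
      ((hf_cont.sub continuousOn_const).div (continuousOn_id.sub continuousOn_const) hconj)
  have hd : DifferentiableOn ℂ g {w | 0 < w.im} :=
    ((differentiableOn_dslope hnhds).2 hf_diff).sub ((hf_diff.sub (differentiableOn_const _)).div
      (differentiableOn_id.sub (differentiableOn_const _)) fun w hw => hconj w (le_of_lt hw))
  have hdecay : Tendsto (fun w => w • g w) (cobounded ℂ ⊓ 𝓟 {w | 0 ≤ w.im}) (𝓝 0) := by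
    have hbdd : IsBoundedUnder (· ≤ ·) (cobounded ℂ ⊓ 𝓟 {w | 0 ≤ w.im}) fun w => ‖f w - f z‖ :=
      isBoundedUnder_of_eventually_le (eventually_inf_principal.2 (.of_forall hbound))
    have hK := (tendsto_mul_one_div_sub_sub_one_div_sub_cobounded z (conj z)).mono_left
      (inf_le_left (b := 𝓟 {w : ℂ | 0 ≤ w.im}))
    refine (isBoundedUnder_le_mul_tendsto_zero hbdd hK).congr' ?_
    filter_upwards [(eventually_ne_cobounded z).filter_mono inf_le_left] with w hw
    rw [smul_eq_mul, hg_eq w hw]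
    ring
  have hgx : ∀ x : ℝ, g x = 2 * Real.pi * I * ((f x - f z) * halfPlanePoissonKernel z x) :=
    fun x => by
      have hxz : (x : ℂ) ≠ z := fun h => hz.ne (by simpa using congrArg im h)
      rw [hg_eq x hxz, halfPlanePoissonKernel]
      field_simp
  have hint : Integrable fun x : ℝ => g x := by
    have hfx : Continuous fun x : ℝ => f x - f z :=
      (hf_cont.comp_continuous continuous_ofReal fun x => by simp).sub continuous_const
    refine (((integrable_halfPlanePoissonKernel hz.ne').bdd_mul hfx.aestronglyMeasurable
      (ae_of_all _ fun x => hbound x (by simp))).const_mul _).congr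
      (ae_of_all _ fun x => (hgx x).symm)
  have h0 := integral_eq_zero_of_upperHalfPlane hc hd hint hdecay
  simp_rw [hgx, integral_const_mul] at h0
  exact (mul_eq_zero.1 h0).resolve_left (by simp [Real.pi_ne_zero])

/-- Poisson integral formula for the upper half-plane: if `f` is continuous and bounded
on the closed upper half-plane and holomorphic on the open upper half-plane, then for
`Im z > 0`, `λ ↦ f(λ) h_z(λ)` is integrable on `ℝ` and its integral equals `f z`, where
`h_z(ζ) = (1/(2πi)) (1/(ζ - z) - 1/(ζ - conj z))`. -/
theorem poisson_integral_formula_upper_half_plane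
    (f : ℂ → ℂ)
    (hf_cont : ContinuousOn f {w : ℂ | 0 ≤ w.im})
    (hf_bdd : ∃ M : ℝ, ∀ w : ℂ, 0 ≤ w.im → ‖f w‖ ≤ M)
    (hf_diff : DifferentiableOn ℂ f {w : ℂ | 0 < w.im})
    (z : ℂ) (hz : 0 < z.im) :
    Integrable (fun lam : ℝ =>
        f lam * ((1 / (2 * Real.pi * I)) *
          (1 / ((lam : ℂ) - z) - 1 / ((lam : ℂ) - (starRingEnd ℂ) z)))) ∧
    ∫ lam : ℝ,
        f lam * ((1 / (2 * Real.pi * I)) *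
          (1 / ((lam : ℂ) - z) - 1 / ((lam : ℂ) - (starRingEnd ℂ) z)))
      = f z := by
  obtain ⟨M, hM⟩ := hf_bdd
  have hK := integrable_halfPlanePoissonKernel hz.ne'
  have hfK : Integrable fun x : ℝ => f x * halfPlanePoissonKernel z x :=
    hK.bdd_mul (hf_cont.comp_continuous continuous_ofReal fun x => by simp).aestronglyMeasurable
      (ae_of_all _ fun x => hM x (by simp))
  refine ⟨hfK, ?_⟩
  calc ∫ x : ℝ, f x * halfPlanePoissonKernel z x
      = (∫ x : ℝ, (f x - f z) * halfPlanePoissonKernel z x) +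
          f z * ∫ x : ℝ, halfPlanePoissonKernel z x := by
        have hfK' : Integrable fun x : ℝ => (f x - f z) * halfPlanePoissonKernel z x :=
          (hfK.sub (hK.const_mul (f z))).congr (ae_of_all _ fun x => (sub_mul _ _ _).symm)
        rw [← integral_const_mul, ← integral_add hfK' (hK.const_mul _)]
        simp_rw [← add_mul, sub_add_cancel]
    _ = f z := by
        rw [integral_sub_mul_halfPlanePoissonKernel_eq_zero hf_cont hM hf_diff hz,
          integral_halfPlanePoissonKernel hz, zero_add, mul_one]
end

section
/- Let μ be a positive Borel measure on [0,∞) and let α > 0 and a > 0. Assume that for every t > 0 the function λ ↦ e^{−tλ} is μ-integrable, and that t^α · ∫₀^∞ e^{−tλ} dμ(λ) → a as t → 0⁺. Then μ([0,r]) / r^α → a / Γ(α+1) as r → ∞. -/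
/-!
The measures `ν_t`, images of `t^α e^{-tλ} dμ(λ)` under `λ ↦ e^{-tλ}`, live on `[0,1]`, and the
`n`-th moment of `ν_t` is `(n+1)^{-α}` times the normalised Laplace transform `s^α ∫ e^{-sλ} dμ`
at `s = (n+1)t`. So as `t → 0⁺` the moments of `ν_t` converge to those of `ν₁` built from the
model measure `ρ = a/Γ(α) s^{α-1} ds`, whose normalised Laplace transform is identically `a`, and
by Weierstrass approximation `ν_t → ν₁` against continuous functions. Testing against
`x⁻¹ 𝟙_{[e⁻¹,1]}`, sandwiched between continuous ramps as `ν₁` has no atoms, gives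
`t^α μ[0,1/t] → ρ[0,1] = a/Γ(α+1)`.
-/

open MeasureTheory Filter Topology Set

namespace Karamata

section Moments

variable {ν : Measure ℝ} [IsFiniteMeasure ν] {a b : ℝ}

lemma integrable_of_ae_mem_Icc (hν : ∀ᵐ x ∂ν, x ∈ Icc a b)
    {f : ℝ → ℝ} (hf : Continuous f) : Integrable f ν := by
  rw [← Measure.restrict_eq_self_of_ae_mem hν]
  exact hf.continuousOn.integrableOn_compact isCompact_Icc

lemma dist_integral_le_of_ae_mem_Icc (hν : ∀ᵐ x ∂ν, x ∈ Icc a b)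
    {f g : ℝ → ℝ} (hf : Continuous f) (hg : Continuous g) {η : ℝ}
    (hfg : ∀ x ∈ Icc a b, |f x - g x| ≤ η) :
    dist (∫ x, f x ∂ν) (∫ x, g x ∂ν) ≤ η * ν.real univ := by
  rw [dist_eq_norm, ← integral_sub (integrable_of_ae_mem_Icc hν hf)
    (integrable_of_ae_mem_Icc hν hg)]
  refine norm_integral_le_of_norm_le_const ?_
  filter_upwards [hν] with x hx using hfg x hx

lemma integral_eval_eq_sum_moments (hν : ∀ᵐ x ∂ν, x ∈ Icc a b) (p : Polynomial ℝ) :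
    ∫ x, p.eval x ∂ν
      = ∑ i ∈ Finset.range (p.natDegree + 1), p.coeff i * ∫ x, x ^ i ∂ν := by
  simp_rw [Polynomial.eval_eq_sum_range, ← integral_const_mul]
  exact integral_finsetSum _ fun i _ =>
    (integrable_of_ae_mem_Icc hν (continuous_pow i)).const_mul _

variable {ι : Type*} {l : Filter ι} {μ : ι → Measure ℝ}

theorem tendsto_integral_of_tendsto_moments
    (hfin : ∀ᶠ i in l, IsFiniteMeasure (μ i)) (hμ : ∀ᶠ i in l, ∀ᵐ x ∂μ i, x ∈ Icc a b)
    (hν : ∀ᵐ x ∂ν, x ∈ Icc a b)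
    (hmom : ∀ n : ℕ, Tendsto (fun i => ∫ x, x ^ n ∂μ i) l (𝓝 (∫ x, x ^ n ∂ν)))
    {f : ℝ → ℝ} (hf : Continuous f) :
    Tendsto (fun i => ∫ x, f x ∂μ i) l (𝓝 (∫ x, f x ∂ν)) := by
  have hmass : ∀ᶠ i in l, (μ i).real univ < ν.real univ + 1 := by
    simpa using (hmom 0).eventually (gt_mem_nhds (lt_add_one (∫ x, x ^ 0 ∂ν)))
  rw [Metric.tendsto_nhds]
  intro ε hε
  set η := ε / (3 * (ν.real univ + 1)) with hη_def
  have hη : 0 < η := by positivity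
  have hηmass : η * (ν.real univ + 1) = ε / 3 := by
    rw [hη_def]; field_simp
  obtain ⟨p, hp⟩ := exists_polynomial_near_of_continuousOn a b f hf.continuousOn η hη
  have hfp : ∀ x ∈ Icc a b, |f x - p.eval x| ≤ η := fun x hx =>
    (abs_sub_comm _ _).trans_le (hp x hx).le
  have hp_lim : Tendsto (fun i => ∫ x, p.eval x ∂μ i) l (𝓝 (∫ x, p.eval x ∂ν)) := by
    rw [integral_eval_eq_sum_moments hν]
    refine (tendsto_finsetSum _ fun i _ => (hmom i).const_mul (p.coeff i)).congr' ?_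
    filter_upwards [hfin, hμ] with i hfin hμ
    exact (integral_eval_eq_sum_moments hμ p).symm
  filter_upwards [hfin, hμ, hmass, Metric.tendsto_nhds.mp hp_lim (ε / 3) (by positivity)]
    with i hfin hμ hmass hpi
  have hfpi : dist (∫ x, f x ∂μ i) (∫ x, p.eval x ∂μ i) ≤ ε / 3 := by
    rw [← hηmass]
    exact (dist_integral_le_of_ae_mem_Icc hμ hf p.continuous hfp).trans (by gcongr)
  have hfp₀ : dist (∫ x, p.eval x ∂ν) (∫ x, f x ∂ν) ≤ ε / 3 := by
    rw [dist_comm, ← hηmass]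
    exact (dist_integral_le_of_ae_mem_Icc hν hf p.continuous hfp).trans (by gcongr; linarith)
  linarith [dist_triangle4 (∫ x, f x ∂μ i) (∫ x, p.eval x ∂μ i) (∫ x, p.eval x ∂ν) (∫ x, f x ∂ν)]

end Moments

noncomputable def ramp (b δ x : ℝ) : ℝ := min 1 (max 0 ((x - b) / δ))

section Ramp

variable {b δ x : ℝ}

@[fun_prop]
lemma continuous_ramp (b δ : ℝ) : Continuous (ramp b δ) := by
  unfold ramp; fun_prop

lemma ramp_nonneg : 0 ≤ ramp b δ x := le_min zero_le_one (le_max_left _ _)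

lemma ramp_le_one : ramp b δ x ≤ 1 := min_le_left _ _

lemma abs_mul_ramp_le {y C : ℝ} (hy : |y| ≤ C) : |y * ramp b δ x| ≤ C := by
  rw [abs_mul, abs_of_nonneg ramp_nonneg]
  exact (mul_le_of_le_one_right (abs_nonneg y) ramp_le_one).trans hy

lemma ramp_eq_zero (hδ : 0 ≤ δ) (hx : x ≤ b) : ramp b δ x = 0 := by
  rw [ramp, max_eq_left (div_nonpos_of_nonpos_of_nonneg (by linarith) hδ),
    min_eq_right zero_le_one]

lemma ramp_eq_one (hδ : 0 < δ) (hx : b + δ ≤ x) : ramp b δ x = 1 := by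
  have : 1 ≤ (x - b) / δ := (le_div_iff₀ hδ).mpr (by linarith)
  rw [ramp, max_eq_right (zero_le_one.trans this), min_eq_left this]

end Ramp

section Indicator

variable {ν : Measure ℝ} [IsFiniteMeasure ν] {h : ℝ → ℝ} {c C : ℝ}

-- Covers both the ramp `b δ = c` below the indicator of `Ici c` and `b δ = c - δ` above it.
lemma tendsto_integral_mul_ramp (hh : Continuous h) (hC : ∀ x, |h x| ≤ C) (hc : ν {c} = 0)
    {b : ℝ → ℝ} (hb : ∀ δ, 0 < δ → c - δ ≤ b δ ∧ b δ ≤ c) :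
    Tendsto (fun δ => ∫ x, h x * ramp (b δ) δ x ∂ν) (𝓝[>] 0)
      (𝓝 (∫ x, (Ici c).indicator h x ∂ν)) := by
  refine tendsto_integral_filter_of_dominated_convergence (fun _ => C)
    (.of_forall fun δ => (hh.mul (continuous_ramp _ _)).aestronglyMeasurable)
    (.of_forall fun δ => .of_forall fun x => abs_mul_ramp_le (hC x)) (integrable_const C) ?_
  filter_upwards [measure_eq_zero_iff_ae_notMem.mp hc] with x (hx : x ≠ c)
  rcases hx.lt_or_gt with hlt | hgt
  · rw [indicator_of_notMem (mt mem_Ici.mp (not_le.mpr hlt))]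
    refine tendsto_const_nhds.congr' ?_
    filter_upwards [Ioo_mem_nhdsGT (sub_pos.mpr hlt)] with δ ⟨hδ, hδc⟩
    rw [ramp_eq_zero hδ.le (by linarith [hb δ hδ]), mul_zero]
  · rw [indicator_of_mem (mem_Ici.mpr hgt.le)]
    refine tendsto_const_nhds.congr' ?_
    filter_upwards [Ioo_mem_nhdsGT (sub_pos.mpr hgt)] with δ ⟨hδ, hδc⟩
    rw [ramp_eq_one hδ (by linarith [hb δ hδ]), mul_one]

variable {ι : Type*} {l : Filter ι} {μ : ι → Measure ℝ}

theorem tendsto_integral_indicator_Ici (hfin : ∀ᶠ i in l, IsFiniteMeasure (μ i))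
    (hconv : ∀ f : ℝ → ℝ, Continuous f → Tendsto (fun i => ∫ x, f x ∂μ i) l (𝓝 (∫ x, f x ∂ν)))
    (hh : Continuous h) (hh0 : ∀ x, 0 ≤ h x) (hC : ∀ x, h x ≤ C) (hc : ν {c} = 0) :
    Tendsto (fun i => ∫ x, (Ici c).indicator h x ∂μ i) l
      (𝓝 (∫ x, (Ici c).indicator h x ∂ν)) := by
  have habs : ∀ x, |h x| ≤ C := fun x => by rw [abs_of_nonneg (hh0 x)]; exact hC x
  have hind : ∀ x, |(Ici c).indicator h x| ≤ C := fun x => by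
    by_cases hx : x ∈ Ici c
    · rw [indicator_of_mem hx]; exact habs x
    · rw [indicator_of_notMem (mt mem_Ici.mp hx), abs_zero]; exact (abs_nonneg _).trans (habs x)
  have hint : ∀ ρ : Measure ℝ, IsFiniteMeasure ρ → Integrable ((Ici c).indicator h) ρ :=
    fun ρ _ => .of_bound (hh.measurable.indicator measurableSet_Ici).aestronglyMeasurable C
      (.of_forall hind)
  have hint_ramp : ∀ ρ : Measure ℝ, IsFiniteMeasure ρ → ∀ b δ,
      Integrable (fun x => h x * ramp b δ x) ρ :=
    fun ρ _ b δ => .of_bound (by fun_prop) C (.of_forall fun x => abs_mul_ramp_le (habs x))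
  refine tendsto_order.2 ⟨fun y hy => ?_, fun y hy => ?_⟩
  · obtain ⟨δ, hyδ, hδ⟩ := (((tendsto_integral_mul_ramp hh habs hc (b := fun _ => c)
      fun δ hδ => ⟨by linarith, le_rfl⟩).eventually (lt_mem_nhds hy)).and
        self_mem_nhdsWithin).exists
    filter_upwards [hfin, (hconv (fun x => h x * ramp c δ x) (by fun_prop)).eventually
      (lt_mem_nhds hyδ)] with i hfin hi
    refine hi.trans_le (integral_mono (hint_ramp _ hfin c δ) (hint _ hfin) fun x => ?_)
    by_cases hx : c ≤ x
    · rw [indicator_of_mem (mem_Ici.mpr hx)]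
      exact mul_le_of_le_one_right (hh0 x) ramp_le_one
    · rw [indicator_of_notMem (mt mem_Ici.mp hx), ramp_eq_zero hδ.le (le_of_not_ge hx),
        mul_zero]
  · obtain ⟨δ, hyδ, hδ⟩ := (((tendsto_integral_mul_ramp hh habs hc (b := fun δ => c - δ)
      fun δ hδ => ⟨le_rfl, by linarith [show (0 : ℝ) < δ from hδ]⟩).eventually
        (gt_mem_nhds hy)).and self_mem_nhdsWithin).exists
    filter_upwards [hfin, (hconv (fun x => h x * ramp (c - δ) δ x) (by fun_prop)).eventually
      (gt_mem_nhds hyδ)] with i hfin hi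
    refine (integral_mono (hint _ hfin) (hint_ramp _ hfin (c - δ) δ) fun x => ?_).trans_lt hi
    by_cases hx : c ≤ x
    · rw [indicator_of_mem (mem_Ici.mpr hx), ramp_eq_one hδ (by linarith), mul_one]
    · rw [indicator_of_notMem (mt mem_Ici.mp hx)]; exact mul_nonneg (hh0 x) ramp_nonneg

end Indicator

noncomputable def laplaceMeasure (μ : Measure ℝ) (α t : ℝ) : Measure ℝ :=
  (μ.withDensity fun lam => ENNReal.ofReal (t ^ α * Real.exp (-t * lam))).map
    fun lam => Real.exp (-t * lam)

section Laplace

variable {μ : Measure ℝ} {α t : ℝ}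

lemma integral_laplaceMeasure (ht : 0 ≤ t) {f : ℝ → ℝ} (hf : Measurable f) :
    ∫ x, f x ∂laplaceMeasure μ α t
      = t ^ α * ∫ lam, f (Real.exp (-t * lam)) * Real.exp (-t * lam) ∂μ := by
  rw [laplaceMeasure, integral_map (by fun_prop) hf.aestronglyMeasurable,
    integral_withDensity_eq_integral_toReal_smul (by fun_prop)
      (.of_forall fun _ => ENNReal.ofReal_lt_top), ← integral_const_mul]
  refine integral_congr_ae (.of_forall fun lam => ?_)
  dsimp only
  rw [smul_eq_mul, ENNReal.toReal_ofReal (by positivity)]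
  ring

lemma isFiniteMeasure_laplaceMeasure (h : Integrable (fun lam => Real.exp (-t * lam)) μ) :
    IsFiniteMeasure (laplaceMeasure μ α t) := by
  have := isFiniteMeasure_withDensity_ofReal (h.const_mul (t ^ α)).hasFiniteIntegral
  rw [laplaceMeasure]
  infer_instance

lemma ae_mem_Icc_laplaceMeasure (hμ : μ (Iio 0) = 0) (ht : 0 ≤ t) :
    ∀ᵐ x ∂laplaceMeasure μ α t, x ∈ Icc 0 1 := by
  rw [laplaceMeasure]
  refine (ae_map_iff (p := (· ∈ Icc (0 : ℝ) 1)) (by fun_prop) measurableSet_Icc).mpr ?_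
  refine (withDensity_absolutelyContinuous _ _).ae_le ?_
  filter_upwards [measure_eq_zero_iff_ae_notMem.mp hμ] with lam (hlam : ¬ lam < 0)
  exact ⟨(Real.exp_pos _).le, Real.exp_le_one_iff.mpr (by nlinarith)⟩

lemma measure_singleton_laplaceMeasure [NullSingletonClass μ] (ht : t ≠ 0) (x : ℝ) :
    laplaceMeasure μ α t {x} = 0 := by
  rw [laplaceMeasure, Measure.map_apply (by fun_prop) (measurableSet_singleton x)]
  refine Set.Subsingleton.measure_zero (fun u hu v hv => ?_) _
  exact mul_left_cancel₀ (neg_ne_zero.mpr ht) (Real.exp_injective (hu.trans hv.symm))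

lemma integral_pow_laplaceMeasure (ht : 0 < t) (n : ℕ) :
    ∫ x, x ^ n ∂laplaceMeasure μ α t = ((n : ℝ) + 1) ^ (-α) *
      ((((n : ℝ) + 1) * t) ^ α * ∫ lam, Real.exp (-(((n : ℝ) + 1) * t) * lam) ∂μ) := by
  have hn : (0 : ℝ) < n + 1 := by positivity
  have hexp : ∀ lam, Real.exp (-t * lam) ^ n * Real.exp (-t * lam)
      = Real.exp (-(((n : ℝ) + 1) * t) * lam) := fun lam => by
    rw [← Real.exp_nat_mul, ← Real.exp_add]; ring_nf
  rw [integral_laplaceMeasure (f := fun x => x ^ n) ht.le (by fun_prop)]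
  simp_rw [hexp, Real.mul_rpow hn.le ht.le, ← mul_assoc, ← Real.rpow_add hn, neg_add_cancel,
    Real.rpow_zero, one_mul]

lemma tendsto_integral_pow_laplaceMeasure {a : ℝ}
    (h_lim : Tendsto (fun t : ℝ => t ^ α * ∫ lam, Real.exp (-t * lam) ∂μ) (𝓝[>] 0) (𝓝 a))
    (n : ℕ) :
    Tendsto (fun t => ∫ x, x ^ n ∂laplaceMeasure μ α t) (𝓝[>] 0)
      (𝓝 (((n : ℝ) + 1) ^ (-α) * a)) := by
  have hn : (0 : ℝ) < n + 1 := by positivity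
  have hscale : Tendsto (fun t : ℝ => ((n : ℝ) + 1) * t) (𝓝[>] 0) (𝓝[>] 0) :=
    tendsto_iff_comap.mpr (comap_mulLeft_nhdsGT_zero hn).ge
  refine ((h_lim.comp hscale).const_mul _).congr' ?_
  filter_upwards [self_mem_nhdsWithin] with t (ht : 0 < t)
  exact (integral_pow_laplaceMeasure ht n).symm

lemma integral_indicator_laplaceMeasure (ht : 0 < t) :
    ∫ x, (Ici (Real.exp (-1))).indicator (fun x => (max x (Real.exp (-1)))⁻¹) x
      ∂laplaceMeasure μ α t = t ^ α * μ.real (Iic t⁻¹) := by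
  rw [integral_laplaceMeasure ht.le ((by fun_prop : Measurable fun x : ℝ =>
    (max x (Real.exp (-1)))⁻¹).indicator measurableSet_Ici),
    ← integral_indicator_one measurableSet_Iic]
  congr 1
  refine integral_congr_ae (.of_forall fun lam => ?_)
  have hiff : Real.exp (-1) ≤ Real.exp (-t * lam) ↔ lam ≤ t⁻¹ := by
    rw [Real.exp_le_exp, ← one_div, le_div_iff₀ ht]
    constructor <;> intro h <;> linarith
  dsimp only
  by_cases hlam : lam ≤ t⁻¹
  · rw [indicator_of_mem (mem_Ici.mpr (hiff.mpr hlam)), indicator_of_mem (mem_Iic.mpr hlam),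
      max_eq_left (hiff.mpr hlam), inv_mul_cancel₀ (Real.exp_pos _).ne', Pi.one_apply]
  · rw [indicator_of_notMem (mt (hiff.mp ∘ mem_Ici.mp) hlam),
      indicator_of_notMem (mt mem_Iic.mp hlam), zero_mul]

end Laplace

noncomputable def powerMeasure (α a : ℝ) : Measure ℝ :=
  (volume.restrict (Ioi 0)).withDensity fun s => ENNReal.ofReal (a / Real.Gamma α * s ^ (α - 1))

section Power

variable {α a : ℝ}

lemma div_Gamma_mul_rpow_nonneg (hα : 0 < α) (ha : 0 ≤ a) {s : ℝ} (hs : 0 ≤ s) :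
    0 ≤ a / Real.Gamma α * s ^ (α - 1) :=
  mul_nonneg (div_nonneg ha (Real.Gamma_pos_of_pos hα).le) (Real.rpow_nonneg hs _)

instance : NullSingletonClass (powerMeasure α a) := by
  rw [powerMeasure]; infer_instance

lemma powerMeasure_Iio : powerMeasure α a (Iio 0) = 0 :=
  withDensity_absolutelyContinuous _ _ <| by
    rw [Measure.restrict_apply measurableSet_Iio, Iio_inter_Ioi, Ioo_self, measure_empty]

lemma integral_powerMeasure (hα : 0 < α) (ha : 0 ≤ a) (g : ℝ → ℝ) :
    ∫ s, g s ∂powerMeasure α a = ∫ s in Ioi 0, a / Real.Gamma α * s ^ (α - 1) * g s := by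
  rw [powerMeasure, integral_withDensity_eq_integral_toReal_smul (by fun_prop)
    (.of_forall fun _ => ENNReal.ofReal_lt_top)]
  refine setIntegral_congr_fun measurableSet_Ioi fun s (hs : 0 < s) => ?_
  rw [ENNReal.toReal_ofReal (div_Gamma_mul_rpow_nonneg hα ha hs.le), smul_eq_mul]

lemma isFiniteMeasure_laplaceMeasure_powerMeasure (hα : 0 < α) (ha : 0 ≤ a) :
    IsFiniteMeasure (laplaceMeasure (powerMeasure α a) α 1) := by
  refine isFiniteMeasure_laplaceMeasure ?_
  rw [powerMeasure, integrable_withDensity_iff_integrable_smul' (by fun_prop)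
    (.of_forall fun _ => ENNReal.ofReal_lt_top)]
  refine ((Real.GammaIntegral_convergent hα).const_mul (a / Real.Gamma α)).congr ?_
  filter_upwards [ae_restrict_mem measurableSet_Ioi] with s (hs : 0 < s)
  rw [ENNReal.toReal_ofReal (div_Gamma_mul_rpow_nonneg hα ha hs.le), smul_eq_mul, neg_one_mul]
  ring

lemma mul_integral_exp_powerMeasure (hα : 0 < α) (ha : 0 ≤ a) {t : ℝ} (ht : 0 < t) :
    t ^ α * ∫ s, Real.exp (-t * s) ∂powerMeasure α a = a := by
  have hΓ := Real.Gamma_pos_of_pos hα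
  simp_rw [integral_powerMeasure hα ha, mul_assoc, integral_const_mul, neg_mul,
    Real.integral_rpow_mul_exp_neg_mul_Ioi hα ht, one_div, Real.inv_rpow ht.le]
  field_simp

lemma measureReal_powerMeasure_Iic_one (hα : 0 < α) (ha : 0 ≤ a) :
    (powerMeasure α a).real (Iic 1) = a / Real.Gamma (α + 1) := by
  have hind : ∀ s, a / Real.Gamma α * s ^ (α - 1) * (Iic (1 : ℝ)).indicator 1 s
      = (Iic 1).indicator (fun s => a / Real.Gamma α * s ^ (α - 1)) s := fun s => by
    by_cases hs : s ∈ Iic (1 : ℝ) <;> simp [hs]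
  rw [← integral_indicator_one measurableSet_Iic, integral_powerMeasure hα ha]
  simp_rw [hind]
  rw [setIntegral_indicator measurableSet_Iic, Ioi_inter_Iic, integral_const_mul,
    ← intervalIntegral.integral_of_le zero_le_one, integral_rpow (Or.inl (by linarith)),
    sub_add_cancel, Real.one_rpow, Real.zero_rpow hα.ne', sub_zero, Real.Gamma_add_one hα.ne']
  field_simp

end Power

section Tauberian

variable {μ : Measure ℝ} {α a : ℝ}

lemma nonneg_of_tendsto_laplace
    (h_lim : Tendsto (fun t : ℝ => t ^ α * ∫ lam, Real.exp (-t * lam) ∂μ) (𝓝[>] 0) (𝓝 a)) :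
    0 ≤ a :=
  ge_of_tendsto h_lim <| eventually_nhdsWithin_of_forall fun t (ht : 0 < t) =>
    mul_nonneg (Real.rpow_nonneg ht.le α) (integral_nonneg fun _ => (Real.exp_pos _).le)

theorem tendsto_integral_laplaceMeasure (hμ : μ (Iio 0) = 0) (hα : 0 < α)
    (h_int : ∀ t : ℝ, 0 < t → Integrable (fun lam => Real.exp (-t * lam)) μ)
    (h_lim : Tendsto (fun t : ℝ => t ^ α * ∫ lam, Real.exp (-t * lam) ∂μ) (𝓝[>] 0) (𝓝 a))
    {f : ℝ → ℝ} (hf : Continuous f) :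
    Tendsto (fun t => ∫ x, f x ∂laplaceMeasure μ α t) (𝓝[>] 0)
      (𝓝 (∫ x, f x ∂laplaceMeasure (powerMeasure α a) α 1)) := by
  have ha := nonneg_of_tendsto_laplace h_lim
  have := isFiniteMeasure_laplaceMeasure_powerMeasure hα ha
  refine tendsto_integral_of_tendsto_moments
    (eventually_nhdsWithin_of_forall fun t ht => isFiniteMeasure_laplaceMeasure (h_int t ht))
    (eventually_nhdsWithin_of_forall fun t ht =>
      ae_mem_Icc_laplaceMeasure hμ (le_of_lt ht))
    (ae_mem_Icc_laplaceMeasure powerMeasure_Iio zero_le_one) (fun n => ?_) hf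
  rw [integral_pow_laplaceMeasure one_pos, mul_integral_exp_powerMeasure hα ha (by positivity)]
  exact tendsto_integral_pow_laplaceMeasure h_lim n

theorem tendsto_rpow_mul_measureReal_Iic_inv (hμ : μ (Iio 0) = 0) (hα : 0 < α)
    (h_int : ∀ t : ℝ, 0 < t → Integrable (fun lam => Real.exp (-t * lam)) μ)
    (h_lim : Tendsto (fun t : ℝ => t ^ α * ∫ lam, Real.exp (-t * lam) ∂μ) (𝓝[>] 0) (𝓝 a)) :
    Tendsto (fun t => t ^ α * μ.real (Iic t⁻¹)) (𝓝[>] 0) (𝓝 (a / Real.Gamma (α + 1))) := by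
  have ha := nonneg_of_tendsto_laplace h_lim
  have := isFiniteMeasure_laplaceMeasure_powerMeasure hα ha
  have hc : 0 < Real.exp (-1) := Real.exp_pos _
  have h := tendsto_integral_indicator_Ici (c := Real.exp (-1))
    (h := fun x => (max x (Real.exp (-1)))⁻¹)
    (eventually_nhdsWithin_of_forall fun t ht => isFiniteMeasure_laplaceMeasure (h_int t ht))
    (fun f hf => tendsto_integral_laplaceMeasure hμ hα h_int h_lim hf)
    ((continuous_id.max continuous_const).inv₀ fun x => (lt_max_of_lt_right hc).ne')
    (fun x => inv_nonneg.mpr (hc.le.trans (le_max_right _ _)))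
    (fun x => inv_anti₀ hc (le_max_right _ _)) (measure_singleton_laplaceMeasure one_ne_zero _)
  rw [integral_indicator_laplaceMeasure one_pos, Real.one_rpow, one_mul, inv_one,
    measureReal_powerMeasure_Iic_one hα ha] at h
  exact h.congr' <| eventually_nhdsWithin_of_forall fun t ht =>
    integral_indicator_laplaceMeasure ht

end Tauberian

lemma measureReal_Icc_zero_eq_Iic (μ : Measure ℝ) (hμ : μ (Iio 0) = 0) (r : ℝ) :
    μ.real (Icc 0 r) = μ.real (Iic r) := by
  have hIcc : Icc 0 r = Iic r \ Iio 0 := by ext; simp [and_comm]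
  rw [hIcc, measureReal_def, measureReal_def, measure_sdiff_null hμ]

end Karamata

open Karamata

theorem karamata_tauberian_general
    (μ : Measure ℝ) (hμ_supp : μ (Set.Iio 0) = 0)
    (α a : ℝ) (hα : 0 < α)
    (h_int : ∀ t : ℝ, 0 < t → Integrable (fun lam : ℝ => Real.exp (-t * lam)) μ)
    (h_lim : Tendsto (fun t : ℝ => t ^ α * ∫ lam : ℝ, Real.exp (-t * lam) ∂μ)
      (𝓝[>] 0) (𝓝 a)) :
    Tendsto (fun r : ℝ => (μ (Set.Icc 0 r)).toReal / r ^ α)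
      atTop (𝓝 (a / Real.Gamma (α + 1))) := by
  refine ((tendsto_rpow_mul_measureReal_Iic_inv hμ_supp hα h_int h_lim).comp
    tendsto_inv_atTop_nhdsGT_zero).congr' ?_
  filter_upwards [eventually_gt_atTop 0] with r hr
  rw [Function.comp_apply, inv_inv, ← measureReal_def, measureReal_Icc_zero_eq_Iic μ hμ_supp,
    Real.inv_rpow hr.le, div_eq_inv_mul]

/-- Karamata's Tauberian theorem: if `μ` is a positive Borel measure on `[0,∞)`
(modelled as a measure on `ℝ` giving zero mass to `(-∞,0)`), `α > 0`, `a > 0`,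
`λ ↦ e^{-tλ}` is `μ`-integrable for every `t > 0`, and
`t^α ∫ e^{-tλ} dμ(λ) → a` as `t → 0⁺`, then `μ([0,r]) / r^α → a / Γ(α+1)` as `r → ∞`. -/
theorem karamata_tauberian
    (μ : Measure ℝ) (hμ_supp : μ (Set.Iio 0) = 0)
    (α a : ℝ) (hα : 0 < α) (ha : 0 < a)
    (h_int : ∀ t : ℝ, 0 < t → Integrable (fun lam : ℝ => Real.exp (-t * lam)) μ)
    (h_lim : Tendsto (fun t : ℝ => t ^ α * ∫ lam : ℝ, Real.exp (-t * lam) ∂μ)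
      (𝓝[>] 0) (𝓝 a)) :
    Tendsto (fun r : ℝ => (μ (Set.Icc 0 r)).toReal / r ^ α)
      atTop (𝓝 (a / Real.Gamma (α + 1))) :=
  karamata_tauberian_general μ hμ_supp α a hα h_int h_lim
end

section
/- For every t ≥ 0 and every μ ∈ ℂ with Im μ > 0, the function λ ↦ e^{itλ}·(1/(λ − μ) − 1/(λ − μ̄)) is Lebesgue integrable on ℝ and (1/(2πi)) ∫_{-∞}^{∞} e^{itλ} (1/(λ − μ) − 1/(λ − μ̄)) dλ = e^{itμ}. -/
/-! The difference of the two Cauchy kernels `1/(λ - μ) - 1/(λ - μ̄)` is `2πi` times the density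
of the Cauchy distribution with location `Re μ` and scale `Im μ`, so the integral is `2πi` times
its characteristic function at `t`, namely `e^{it Re μ - Im μ |t|}`, which is `e^{itμ}` for
`t ≥ 0`. That characteristic function comes from Fourier inversion applied to `e^{-γ|x|}`, whose
Fourier transform is an elementary integral over the two half-lines. -/

open MeasureTheory Complex Real Set FourierTransform ProbabilityTheory
open scoped NNReal

theorem integrableOn_Iic_cexp_mul_sub_mul_abs {a : ℂ} {b : ℝ} (h : |a.re| < b) :
    IntegrableOn (fun x : ℝ => cexp (a * x - b * |x|)) (Iic 0) := by
  refine (integrableOn_exp_mul_complex_Iic (a := a + b) ?_ 0).congr_fun (fun x hx => ?_)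
    measurableSet_Iic
  · simp only [add_re, ofReal_re]; linarith [neg_abs_le a.re]
  · rw [abs_of_nonpos hx]; push_cast; ring_nf

theorem integrableOn_Ioi_cexp_mul_sub_mul_abs {a : ℂ} {b : ℝ} (h : |a.re| < b) :
    IntegrableOn (fun x : ℝ => cexp (a * x - b * |x|)) (Ioi 0) := by
  refine (integrableOn_exp_mul_complex_Ioi (a := a - b) ?_ 0).congr_fun (fun x hx => ?_)
    measurableSet_Ioi
  · simp only [sub_re, ofReal_re]; linarith [le_abs_self a.re]
  · rw [abs_of_pos (mem_Ioi.mp hx)]; ring_nf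

theorem integrable_cexp_mul_sub_mul_abs {a : ℂ} {b : ℝ} (h : |a.re| < b) :
    Integrable (fun x : ℝ => cexp (a * x - b * |x|)) := by
  rw [← integrableOn_univ, ← Iic_union_Ioi (a := 0)]
  exact (integrableOn_Iic_cexp_mul_sub_mul_abs h).union (integrableOn_Ioi_cexp_mul_sub_mul_abs h)

theorem integral_cexp_mul_sub_mul_abs {a : ℂ} {b : ℝ} (h : |a.re| < b) :
    ∫ x : ℝ, cexp (a * x - b * |x|) = 2 * b / (b ^ 2 - a ^ 2) := by
  have hplus : 0 < (a + b).re := by simp only [add_re, ofReal_re]; linarith [neg_abs_le a.re]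
  have hminus : (a - b).re < 0 := by simp only [sub_re, ofReal_re]; linarith [le_abs_self a.re]
  have hIic : ∫ x in Iic (0 : ℝ), cexp (a * x - b * |x|) = 1 / (a + b) := calc
    _ = ∫ x in Iic (0 : ℝ), cexp ((a + b) * x) :=
      setIntegral_congr_fun measurableSet_Iic fun x hx => by
        rw [abs_of_nonpos hx]; congr 1; push_cast; ring
    _ = 1 / (a + b) := by simpa using integral_exp_mul_complex_Iic hplus 0
  have hIoi : ∫ x in Ioi (0 : ℝ), cexp (a * x - b * |x|) = 1 / (b - a) := calc
    _ = ∫ x in Ioi (0 : ℝ), cexp ((a - b) * x) :=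
      setIntegral_congr_fun measurableSet_Ioi fun x hx => by
        rw [abs_of_pos (mem_Ioi.mp hx)]; congr 1; ring
    _ = 1 / (b - a) := by
      rw [integral_exp_mul_complex_Ioi hminus 0]; simp [neg_div, ← inv_neg]
  have hplus' : a + b ≠ 0 := fun h0 => by simp [h0] at hplus
  have hminus' : (b : ℂ) - a ≠ 0 := fun h0 => by
    rw [← neg_sub, h0] at hminus; simp at hminus
  rw [← intervalIntegral.integral_Iic_add_Ioi (integrableOn_Iic_cexp_mul_sub_mul_abs h)
    (integrableOn_Ioi_cexp_mul_sub_mul_abs h), hIic, hIoi,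
    show (b : ℂ) ^ 2 - a ^ 2 = (a + b) * (b - a) by ring, div_add_div _ _ hplus' hminus']
  ring

theorem fourier_ofReal_exp_neg_mul_abs {γ : ℝ≥0} (hγ : γ ≠ 0) (ξ : ℝ) :
    𝓕 (fun x : ℝ => (rexp (-(γ * |x|)) : ℂ)) ξ = (2 * π * cauchyPDFReal 0 γ (2 * π * ξ) : ℝ) := by
  have hγ' : |(-(2 * π * ξ : ℝ) * I).re| < γ := by simpa using pos_iff_ne_zero.mpr hγ
  rw [Real.fourier_real_eq_integral_exp_smul]
  calc _ = ∫ v : ℝ, cexp (-(2 * π * ξ : ℝ) * I * v - γ * |v|) := by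
        congr 1 with v
        rw [smul_eq_mul, ofReal_exp, ← Complex.exp_add]
        congr 1; push_cast; ring
    _ = _ := by
        rw [integral_cexp_mul_sub_mul_abs hγ', cauchyPDFReal_def, mul_pow, I_sq]
        push_cast
        field_simp
        ring

theorem integral_cexp_mul_cauchyPDFReal_zero {γ : ℝ≥0} (hγ : γ ≠ 0) (t : ℝ) :
    ∫ x : ℝ, cexp (I * t * x) * cauchyPDFReal 0 γ x = rexp (-(γ * |t|)) := by
  set f : ℝ → ℂ := fun x => rexp (-(γ * |x|))
  have hf : Integrable f := by
    simpa [f] using integrable_cexp_mul_sub_mul_abs (a := 0) (b := γ)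
      (by simpa using pos_iff_ne_zero.mpr hγ)
  have hFf : 𝓕 f = fun ξ => ((2 * π * cauchyPDFReal 0 γ (2 * π * ξ) : ℝ) : ℂ) :=
    funext (fourier_ofReal_exp_neg_mul_abs hγ)
  have hFf_int : Integrable (𝓕 f) := by
    rw [hFf]
    exact (((integrable_cauchyPDFReal 0).comp_mul_left' (by positivity)).const_mul _).ofReal
  have hinv := congrFun ((by fun_prop : Continuous f).fourierInv_fourier_eq hf hFf_int) t
  rw [fourierInv_eq', hFf] at hinv
  set g : ℝ → ℂ := fun x => cexp (I * t * x) * cauchyPDFReal 0 γ x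
  calc ∫ x, g x = (2 * π : ℝ) • ∫ v, g (2 * π * v) := by
        rw [Measure.integral_comp_mul_left, smul_smul, abs_of_pos (by positivity),
          mul_inv_cancel₀ (by positivity), one_smul]
    _ = f t := by
        rw [← hinv, ← integral_smul]
        congr 1 with v
        simp only [g, Real.inner_apply, smul_eq_mul, real_smul]
        push_cast; ring_nf
    _ = rexp (-(γ * |t|)) := rfl

theorem integral_cexp_mul_cauchyPDFReal (x₀ : ℝ) {γ : ℝ≥0} (hγ : γ ≠ 0) (t : ℝ) :
    ∫ x : ℝ, cexp (I * t * x) * cauchyPDFReal x₀ γ x = cexp (I * t * x₀ - γ * |t|) := by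
  rw [← integral_add_right_eq_self _ x₀]
  calc _ = ∫ x : ℝ, cexp (I * t * x₀) * (cexp (I * t * x) * cauchyPDFReal 0 γ x) := by
        congr 1 with x
        simp only [cauchyPDFReal_def, add_sub_cancel_right, sub_zero, ofReal_add, mul_add,
          Complex.exp_add]
        ring
    _ = _ := by
        rw [integral_const_mul, integral_cexp_mul_cauchyPDFReal_zero hγ, ofReal_exp, sub_eq_add_neg,
          Complex.exp_add]
        push_cast; ring

theorem one_div_sub_sub_one_div_sub_conj {μ : ℂ} (hμ : 0 < μ.im) (x : ℝ) :
    1 / ((x : ℂ) - μ) - 1 / ((x : ℂ) - starRingEnd ℂ μ) =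
      2 * π * I * cauchyPDFReal μ.re μ.im.toNNReal x := by
  have hsub : (x : ℂ) - μ ≠ 0 := fun h => by
    have := congrArg im h; simp at this; linarith
  have hsub_conj : (x : ℂ) - starRingEnd ℂ μ ≠ 0 := fun h => by
    have := congrArg im h; simp at this; linarith
  have hprod : ((x : ℂ) - μ) * (x - starRingEnd ℂ μ) = ((x - μ.re) ^ 2 + μ.im ^ 2 : ℝ) := by
    apply Complex.ext <;> simp [sq]; ring
  rw [one_div, one_div, inv_sub_inv hsub hsub_conj, sub_sub_sub_cancel_left, sub_conj, hprod,
    cauchyPDFReal_def, Real.coe_toNNReal _ hμ.le]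
  push_cast
  field_simp

/-- For `t ≥ 0` and `Im μ > 0`, the function
`λ ↦ e^{itλ} (1/(λ − μ) − 1/(λ − conj μ))` is integrable on `ℝ` and
`(1/(2πi)) ∫_ℝ e^{itλ} (1/(λ − μ) − 1/(λ − conj μ)) dλ = e^{itμ}`. -/
theorem poisson_integral_exp
    (t : ℝ) (ht : 0 ≤ t) (μ : ℂ) (hμ : 0 < μ.im) :
    Integrable (fun lam : ℝ =>
        Complex.exp (I * t * lam) *
          (1 / ((lam : ℂ) - μ) - 1 / ((lam : ℂ) - (starRingEnd ℂ) μ))) ∧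
    (1 / (2 * Real.pi * I)) *
        ∫ lam : ℝ, Complex.exp (I * t * lam) *
          (1 / ((lam : ℂ) - μ) - 1 / ((lam : ℂ) - (starRingEnd ℂ) μ))
      = Complex.exp (I * t * μ) := by
  have hγ : μ.im.toNNReal ≠ 0 := by simpa using hμ
  simp_rw [one_div_sub_sub_one_div_sub_conj hμ]
  refine ⟨?_, ?_⟩
  · refine ((integrable_cauchyPDFReal μ.re).ofReal.const_mul _).bdd_mul (c := 1)
      (by fun_prop) (.of_forall fun x => ?_)
    rw [norm_exp]; simp
  · simp_rw [mul_left_comm (cexp _), integral_const_mul, integral_cexp_mul_cauchyPDFReal _ hγ,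
      abs_of_nonneg ht, Real.coe_toNNReal _ hμ.le]
    rw [← mul_assoc, one_div_mul_cancel (by simp [pi_ne_zero]), one_mul]
    congr 1
    conv_rhs => rw [← re_add_im μ]
    linear_combination (-(t * μ.im) : ℂ) * I_sq
end
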